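/- Let A and B be von Neumann algebras, H a complex Hilbert space, P ∈ L(H) positive, and suppose Φ₁ ∈ CP_P(A;H) and Φ₂ ∈ CP_P(B;H) are compatible. If Φ₁ is a *-representation (or if Φ₂ is), then the ranges of Φ₁ and Φ₂ commute, the joint map is unique, and it is given by Ψ(a ⊗ b) = Φ₁(a)Φ₂(b) for all a ∈ A and b ∈ B. -/

import Mathlib

/-!
If `Φ₁ = Ψ (· ⊗ 1)` is a `*`-representation, then every `a ⊗ 1` lies in the multiplicative
domain of the completely positive map `Ψ`: `Ψ ((a ⊗ 1)⋆ (a ⊗ 1)) = Ψ (a ⊗ 1)⋆ Ψ (a ⊗ 1)`.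
By Cauchy–Schwarz for the positive semidefinite form
`⟨∑ cⱼ ⊗ vⱼ, ∑ dₖ ⊗ wₖ⟩ = ∑ ⟪vⱼ, Ψ (cⱼ⋆ dₖ) wₖ⟫`, the vector `(a ⊗ 1) ⊗ u - 1 ⊗ Φ₁ a u` is null,
hence orthogonal to everything, which gives `Ψ ((a ⊗ 1) c) = Φ₁ a Ψ c` and
`Ψ (c (a ⊗ 1)) = Ψ c Φ₁ a`. With `c = 1 ⊗ b` both `Φ₁ a Φ₂ b` and `Φ₂ b Φ₁ a` equal `Ψ (a ⊗ b)`.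
For uniqueness, a completely positive map is positive for the spectral order of the
C⋆-algebra, hence bounded, so it is determined by its values on the dense span of the
elementary tensors.
-/

open scoped ComplexOrder ComplexInnerProductSpace Topology

noncomputable section

/-- A linear map `Φ : A → L(H)` from a `*`-algebra into the bounded operators on a complex
Hilbert space `H` is *completely positive* if for all `n`, `a₁, …, aₙ ∈ A` and
`φ₁, …, φₙ ∈ H` one has `∑ j k, ⟪φ j, Φ (star (a j) * a k) (φ k)⟫ ≥ 0`. -/
def IsCompletelyPositive {A : Type*} [NonUnitalNonAssocSemiring A] [StarRing A] [Module ℂ A]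
    {H : Type*} [NormedAddCommGroup H] [InnerProductSpace ℂ H]
    (Φ : A →ₗ[ℂ] H →L[ℂ] H) : Prop :=
  ∀ (n : ℕ) (a : Fin n → A) (v : Fin n → H),
    0 ≤ ∑ j, ∑ k, ⟪v j, Φ (star (a j) * a k) (v k)⟫

/-- The convex set `CP_P(A;H)` of completely positive maps `Φ : A → L(H)` with `Φ 1 = P`. -/
def CPWithUnit (A : Type*) [Ring A] [StarRing A] [Algebra ℂ A]
    (H : Type*) [NormedAddCommGroup H] [InnerProductSpace ℂ H]
    (P : H →L[ℂ] H) : Set (A →ₗ[ℂ] H →L[ℂ] H) :=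
  {Φ | IsCompletelyPositive Φ ∧ Φ 1 = P}

/-- `x` is an extremal point of the convex set `S`: whenever `x` is a nontrivial convex
combination of two members of `S`, they coincide. -/
def IsExtremalIn {V : Type*} [AddCommMonoid V] [Module ℂ V] (S : Set V) (x : V) : Prop :=
  x ∈ S ∧ ∀ y ∈ S, ∀ z ∈ S, ∀ t : ℝ, 0 < t → t < 1 →
    x = (t : ℂ) • y + ((1 - t : ℝ) : ℂ) • z → y = z

/-- `C`, together with the bilinear map `tmul`, is a tensor product of the algebras
`A` and `B`: `tmul` is multiplicative (`(a ⊗ b)(a' ⊗ b') = aa' ⊗ bb'`), star-preserving,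
unital, and the span of the elementary tensors is dense in `C`. -/
structure IsTensorProductOfAlgebras (A B C : Type*)
    [CStarAlgebra A] [CStarAlgebra B] [CStarAlgebra C]
    (tmul : A →ₗ[ℂ] B →ₗ[ℂ] C) : Prop where
  tmul_mul : ∀ (a a' : A) (b b' : B), tmul a b * tmul a' b' = tmul (a * a') (b * b')
  tmul_star : ∀ (a : A) (b : B), star (tmul a b) = tmul (star a) (star b)
  tmul_one : tmul 1 1 = 1
  dense_span : Dense (↑(Submodule.span ℂ {c : C | ∃ a b, c = tmul a b}) : Set C)

/-- A linear map between `*`-algebras is a `*`-representation if it is multiplicative and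
star-preserving. -/
def IsStarRepresentation {A : Type*} [Ring A] [StarRing A] [Algebra ℂ A]
    {H : Type*} [NormedAddCommGroup H] [InnerProductSpace ℂ H] [CompleteSpace H]
    (Φ : A →ₗ[ℂ] H →L[ℂ] H) : Prop :=
  (∀ a a' : A, Φ (a * a') = Φ a * Φ a') ∧ ∀ a : A, Φ (star a) = star (Φ a)

namespace IsCompletelyPositive

theorem map_star_mul_self_nonneg {C : Type*} [NonUnitalNonAssocSemiring C] [StarRing C]
    [Module ℂ C] {H : Type*} [NormedAddCommGroup H] [InnerProductSpace ℂ H]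
    {Ψ : C →ₗ[ℂ] H →L[ℂ] H} (hΨ : IsCompletelyPositive Ψ) (c : C) :
    0 ≤ Ψ (star c * c) := by
  rw [ContinuousLinearMap.nonneg_iff_isPositive, ContinuousLinearMap.isPositive_iff_complex]
  intro v
  have h : 0 ≤ ⟪Ψ (star c * c) v, v⟫ := by
    rw [← inner_conj_symm, ← Complex.star_def, star_nonneg_iff]
    simpa using hΨ 1 (fun _ => c) (fun _ => v)
  exact ⟨Complex.conj_eq_iff_re.mp h.star_eq, (Complex.nonneg_iff.mp h).1⟩

variable {C : Type*} [CStarAlgebra C]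
  {H : Type*} [NormedAddCommGroup H] [InnerProductSpace ℂ H] [CompleteSpace H]
  {Ψ : C →ₗ[ℂ] H →L[ℂ] H}

def toPositiveLinearMap [PartialOrder C] [StarOrderedRing C] (hΨ : IsCompletelyPositive Ψ) :
    C →ₚ[ℂ] (H →L[ℂ] H) :=
  .mk₀ Ψ fun c hc => by
    obtain ⟨b, rfl⟩ := CStarAlgebra.nonneg_iff_eq_star_mul_self.mp hc
    exact hΨ.map_star_mul_self_nonneg b

theorem map_star (hΨ : IsCompletelyPositive Ψ) (c : C) : Ψ (star c) = star (Ψ c) :=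
  let := CStarAlgebra.spectralOrder C
  have := CStarAlgebra.spectralOrderedRing C
  StarHomClass.map_star hΨ.toPositiveLinearMap c

theorem continuous (hΨ : IsCompletelyPositive Ψ) : Continuous Ψ :=
  let := CStarAlgebra.spectralOrder C
  have := CStarAlgebra.spectralOrderedRing C
  map_continuous hΨ.toPositiveLinearMap

theorem inner_map_apply_left (hΨ : IsCompletelyPositive Ψ) (c : C) (u v : H) :
    ⟪Ψ c u, v⟫ = ⟪u, Ψ (star c) v⟫ := by
  rw [hΨ.map_star, ContinuousLinearMap.star_eq_adjoint, ContinuousLinearMap.adjoint_inner_right]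

/-- On `Hⁿ` this is the inner product of `∑ a j ⊗ v j` and `∑ a k ⊗ w k` in the Stinespring
space of `Ψ`. -/
abbrev gramCore (hΨ : IsCompletelyPositive Ψ) {n : ℕ} (a : Fin n → C) :
    PreInnerProductSpace.Core ℂ (Fin n → H) where
  inner v w := ∑ j, ∑ k, ⟪v j, Ψ (star (a j) * a k) (w k)⟫
  conj_inner_symm v w := by
    simp only [map_sum, inner_conj_symm, hΨ.inner_map_apply_left, star_mul, star_star]
    exact Finset.sum_comm
  re_inner_nonneg v := (Complex.nonneg_iff.mp (hΨ n a v)).1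
  add_left u v w := by simp only [Pi.add_apply, inner_add_left, Finset.sum_add_distrib]
  smul_left v w r := by simp only [Pi.smul_apply, inner_smul_left, Finset.mul_sum]

theorem gram_eq_zero_of_gram_self_eq_zero (hΨ : IsCompletelyPositive Ψ) {n : ℕ}
    {a : Fin n → C} {v : Fin n → H} (hv : ∑ j, ∑ k, ⟪v j, Ψ (star (a j) * a k) (v k)⟫ = 0)
    (w : Fin n → H) : ∑ j, ∑ k, ⟪v j, Ψ (star (a j) * a k) (w k)⟫ = 0 := by
  let c := hΨ.gramCore a
  have h := InnerProductSpace.Core.inner_mul_inner_self_le (c := c) v w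
  rw [show c.inner v v = 0 from hv, map_zero, zero_mul,
    InnerProductSpace.Core.norm_inner_symm (c := c) w v, ← sq] at h
  exact norm_eq_zero.mp (pow_eq_zero_iff two_ne_zero |>.mp (le_antisymm h (sq_nonneg _)))

theorem map_star_mul_of_map_star_mul_self (hΨ : IsCompletelyPositive Ψ) {x : C}
    (hx : Ψ (star x * x) = star (Ψ x) * Ψ x) (hx1 : Ψ 1 * Ψ x = Ψ x) (y : C) :
    Ψ (star x * y) = star (Ψ x) * Ψ y := by
  have inner_star_mul : ∀ (T : H →L[ℂ] H) (u v : H), ⟪u, (star (Ψ x) * T) v⟫ = ⟪Ψ x u, T v⟫ :=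
    fun T u v => by rw [mul_apply_eq_comp, ContinuousLinearMap.star_eq_adjoint,
      ContinuousLinearMap.adjoint_inner_right]
  ext v : 1
  refine ext_inner_left ℂ fun u => ?_
  have hxx : ⟪u, Ψ (star x * x) u⟫ = ⟪Ψ x u, Ψ x u⟫ := by rw [hx, inner_star_mul]
  have hxu : ⟪u, Ψ (star x) (Ψ x u)⟫ = ⟪Ψ x u, Ψ x u⟫ := by rw [← hΨ.inner_map_apply_left]
  have h1u : Ψ 1 (Ψ x u) = Ψ x u := by rw [← mul_apply_eq_comp, hx1]
  -- `x ⊗ u - 1 ⊗ Ψ x u` is a null vector of the Gram form, hence orthogonal to `y ⊗ v`.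
  have hnull := hΨ.gram_eq_zero_of_gram_self_eq_zero (a := ![x, 1, y])
    (v := ![u, -Ψ x u, 0]) (by simp [Fin.sum_univ_three, hxx, hxu, h1u]) ![0, 0, v]
  simp only [Fin.sum_univ_three, Matrix.cons_val_zero, Matrix.cons_val_one, Matrix.cons_val,
    star_one, one_mul, map_zero, inner_zero_left, inner_zero_right, inner_neg_left, add_zero,
    zero_add] at hnull
  rw [inner_star_mul]
  linear_combination hnull

theorem map_mul_of_map_star_mul_self (hΨ : IsCompletelyPositive Ψ) {x : C}
    (hx : Ψ (star x * x) = star (Ψ x) * Ψ x) (hx1 : Ψ 1 * Ψ x = Ψ x) (y : C) :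
    Ψ (y * x) = Ψ y * Ψ x := by
  rw [← star_star (y * x), star_mul, hΨ.map_star, hΨ.map_star_mul_of_map_star_mul_self hx hx1,
    star_mul, star_star, hΨ.map_star, star_star]

variable {A : Type*} [Ring A] [StarRing A] [Algebra ℂ A] {Φ : A →ₗ[ℂ] H →L[ℂ] H}

theorem map_mul_right_of_isStarRepresentation (hΨ : IsCompletelyPositive Ψ)
    (hΦ : IsStarRepresentation Φ) (j : A →⋆ₐ[ℂ] C) (hj : ∀ a, Ψ (j a) = Φ a) (a : A) (c : C) :
    Ψ (c * j a) = Ψ c * Φ a := by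
  have hx : Ψ (star (j a) * j a) = star (Ψ (j a)) * Ψ (j a) := by
    rw [← StarHomClass.map_star j, ← map_mul j]
    simp only [hj, hΦ.1, hΦ.2]
  have hx1 : Ψ 1 * Ψ (j a) = Ψ (j a) := by
    rw [← map_one j]
    simp only [hj, ← hΦ.1, one_mul]
  rw [hΨ.map_mul_of_map_star_mul_self hx hx1, hj]

theorem map_mul_left_of_isStarRepresentation (hΨ : IsCompletelyPositive Ψ)
    (hΦ : IsStarRepresentation Φ) (j : A →⋆ₐ[ℂ] C) (hj : ∀ a, Ψ (j a) = Φ a) (a : A) (c : C) :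
    Ψ (j a * c) = Φ a * Ψ c := by
  rw [← star_star (j a * c), star_mul, hΨ.map_star, ← StarHomClass.map_star j,
    hΨ.map_mul_right_of_isStarRepresentation hΦ j hj, star_mul, ← hΦ.2, star_star,
    hΨ.map_star, star_star]

end IsCompletelyPositive

namespace IsTensorProductOfAlgebras

variable {A B C : Type*} [CStarAlgebra A] [CStarAlgebra B] [CStarAlgebra C]
  {tmul : A →ₗ[ℂ] B →ₗ[ℂ] C}

def inl (htp : IsTensorProductOfAlgebras A B C tmul) : A →⋆ₐ[ℂ] C where
  toFun a := tmul a 1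
  map_one' := htp.tmul_one
  map_mul' a a' := by rw [htp.tmul_mul, one_mul]
  map_zero' := by simp
  map_add' a a' := by simp
  commutes' r := by simp [Algebra.algebraMap_eq_smul_one, htp.tmul_one]
  map_star' a := by rw [htp.tmul_star, star_one]

def inr (htp : IsTensorProductOfAlgebras A B C tmul) : B →⋆ₐ[ℂ] C where
  toFun b := tmul 1 b
  map_one' := htp.tmul_one
  map_mul' b b' := by rw [htp.tmul_mul, one_mul]
  map_zero' := by simp
  map_add' b b' := by simp
  commutes' r := by simp [Algebra.algebraMap_eq_smul_one, htp.tmul_one]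
  map_star' b := by rw [htp.tmul_star, star_one]

@[simp]
theorem inl_apply (htp : IsTensorProductOfAlgebras A B C tmul) (a : A) : htp.inl a = tmul a 1 :=
  rfl

@[simp]
theorem inr_apply (htp : IsTensorProductOfAlgebras A B C tmul) (b : B) : htp.inr b = tmul 1 b :=
  rfl

theorem inl_mul_inr (htp : IsTensorProductOfAlgebras A B C tmul) (a : A) (b : B) :
    htp.inl a * htp.inr b = tmul a b := by
  simp [htp.tmul_mul]

theorem inr_mul_inl (htp : IsTensorProductOfAlgebras A B C tmul) (a : A) (b : B) :
    htp.inr b * htp.inl a = tmul a b := by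
  simp [htp.tmul_mul]

theorem linearMap_ext {E : Type*} [AddCommGroup E] [Module ℂ E] [TopologicalSpace E] [T2Space E]
    (htp : IsTensorProductOfAlgebras A B C tmul) {f g : C →ₗ[ℂ] E} (hf : Continuous f)
    (hg : Continuous g) (h : ∀ a b, f (tmul a b) = g (tmul a b)) : f = g := by
  have := ContinuousLinearMap.ext_on htp.dense_span (f := ⟨f, hf⟩) (g := ⟨g, hg⟩)
    (by rintro _ ⟨a, b, rfl⟩; exact h a b)
  exact LinearMap.ext fun c => DFunLike.congr_fun this c

end IsTensorProductOfAlgebras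

theorem IsCompletelyPositive.map_tmul_of_isStarRepresentation
    {A B C : Type*} [CStarAlgebra A] [CStarAlgebra B] [CStarAlgebra C]
    {tmul : A →ₗ[ℂ] B →ₗ[ℂ] C} (htp : IsTensorProductOfAlgebras A B C tmul)
    {H : Type*} [NormedAddCommGroup H] [InnerProductSpace ℂ H] [CompleteSpace H]
    {Φ₁ : A →ₗ[ℂ] H →L[ℂ] H} {Φ₂ : B →ₗ[ℂ] H →L[ℂ] H} {Ψ : C →ₗ[ℂ] H →L[ℂ] H}
    (hΨ : IsCompletelyPositive Ψ)
    (hmarg₁ : ∀ a : A, Ψ (tmul a 1) = Φ₁ a) (hmarg₂ : ∀ b : B, Ψ (tmul 1 b) = Φ₂ b)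
    (hrep : IsStarRepresentation Φ₁ ∨ IsStarRepresentation Φ₂) (a : A) (b : B) :
    Ψ (tmul a b) = Φ₁ a * Φ₂ b ∧ Ψ (tmul a b) = Φ₂ b * Φ₁ a := by
  rcases hrep with hΦ₁ | hΦ₂
  · constructor
    · rw [← htp.inl_mul_inr, hΨ.map_mul_left_of_isStarRepresentation hΦ₁ htp.inl hmarg₁,
        htp.inr_apply, hmarg₂]
    · rw [← htp.inr_mul_inl, hΨ.map_mul_right_of_isStarRepresentation hΦ₁ htp.inl hmarg₁,
        htp.inr_apply, hmarg₂]
  · constructor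
    · rw [← htp.inl_mul_inr, hΨ.map_mul_right_of_isStarRepresentation hΦ₂ htp.inr hmarg₂,
        htp.inl_apply, hmarg₁]
    · rw [← htp.inr_mul_inl, hΨ.map_mul_left_of_isStarRepresentation hΦ₂ htp.inr hmarg₂,
        htp.inl_apply, hmarg₁]

theorem joint_map_of_star_representation_marginal
    {A B C : Type*} [CStarAlgebra A] [CStarAlgebra B] [CStarAlgebra C]
    (tmul : A →ₗ[ℂ] B →ₗ[ℂ] C) (htp : IsTensorProductOfAlgebras A B C tmul)
    {H : Type*} [NormedAddCommGroup H] [InnerProductSpace ℂ H] [CompleteSpace H]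
    (P : H →L[ℂ] H)
    (Φ₁ : A →ₗ[ℂ] H →L[ℂ] H) (Φ₂ : B →ₗ[ℂ] H →L[ℂ] H)
    (Ψ : C →ₗ[ℂ] H →L[ℂ] H) (hΨ : Ψ ∈ CPWithUnit C H P)
    (hmarg₁ : ∀ a : A, Ψ (tmul a 1) = Φ₁ a) (hmarg₂ : ∀ b : B, Ψ (tmul 1 b) = Φ₂ b)
    (hrep : IsStarRepresentation Φ₁ ∨ IsStarRepresentation Φ₂) :
    (∀ (a : A) (b : B), Commute (Φ₁ a) (Φ₂ b)) ∧
    (∀ (a : A) (b : B), Ψ (tmul a b) = Φ₁ a * Φ₂ b) ∧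
    (∀ Ψ' : C →ₗ[ℂ] H →L[ℂ] H, Ψ' ∈ CPWithUnit C H P →
      (∀ a : A, Ψ' (tmul a 1) = Φ₁ a) → (∀ b : B, Ψ' (tmul 1 b) = Φ₂ b) → Ψ' = Ψ) := by
  have hprod := hΨ.1.map_tmul_of_isStarRepresentation htp hmarg₁ hmarg₂ hrep
  refine ⟨fun a b => (hprod a b).1.symm.trans (hprod a b).2, fun a b => (hprod a b).1, ?_⟩
  intro Ψ' hΨ' hmarg₁' hmarg₂'
  have hprod' := hΨ'.1.map_tmul_of_isStarRepresentation htp hmarg₁' hmarg₂' hrep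
  exact htp.linearMap_ext hΨ'.1.continuous hΨ.1.continuous fun a b =>
    (hprod' a b).1.trans (hprod a b).1.symm
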